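/- arXiv:2107.13813 — 7 statements merged into one kernel-verified Lean document; each statement's English description precedes it below -/
import Mathlib

section
/- The word 0^i 1^j 0^k (with i, j, k ≥ 1) contains no factor of the form x x' where x' is a conjugate of x with x' ≠ x, if and only if j is odd. -/
/-- `x'` is a conjugate (cyclic shift) of `x`. -/
def Conj (x x' : List Bool) : Prop := ∃ u v : List Bool, x = u ++ v ∧ x' = v ++ u

/-- A mesosome: a nonempty word of the form `x ++ x'` with `x'` a conjugate of `x`, `x' ≠ x`. -/
def Mesosome (w : List Bool) : Prop :=
  ∃ x x' : List Bool, w = x ++ x' ∧ Conj x x' ∧ x' ≠ x ∧ x ≠ []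

/-- A word is mesosome-free if no factor (contiguous subword) is a mesosome. -/
def MesosomeFree (w : List Bool) : Prop := ∀ f : List Bool, f <:+: w → ¬ Mesosome f

private lemma conj_length {x x' : List Bool} (h : Conj x x') : x'.length = x.length := by
  obtain ⟨u, v, hx, hx'⟩ := h; subst hx; subst hx'; simp [Nat.add_comm]

private lemma conj_count {x x' : List Bool} (h : Conj x x') (b : Bool) :
    x'.count b = x.count b := by
  obtain ⟨u, v, hx, hx'⟩ := h; subst hx; subst hx'
  simp [List.count_append, Nat.add_comm]

private lemma meso_reverse {f : List Bool} (h : Mesosome f) : Mesosome f.reverse := by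
  obtain ⟨x, x', hf, ⟨u, v, hx, hx'⟩, hne, hnil⟩ := h
  subst hf; subst hx; subst hx'
  refine ⟨(v ++ u).reverse, (u ++ v).reverse, by simp,
    ⟨u.reverse, v.reverse, by simp, by simp⟩, ?_, ?_⟩
  · exact fun hcontra => hne (List.reverse_injective hcontra).symm
  · intro h
    apply hnil
    have : v ++ u = [] := by simpa using congrArg List.reverse h
    simp at this
    simp [this.1, this.2]

private lemma meso_count_even {f : List Bool} (h : Mesosome f) :
    ∃ m, f.count true = 2 * m := by
  obtain ⟨x, x', hf, hconj, -, -⟩ := h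
  refine ⟨x.count true, ?_⟩
  rw [hf, List.count_append, conj_count hconj]
  ring

/-- Structure of infixes of `0^p 1^q`. -/
private lemma infix_struct {p q : ℕ} {f : List Bool}
    (h : f <:+: List.replicate p false ++ List.replicate q true) :
    ∃ a b, f = List.replicate a false ++ List.replicate b true := by
  obtain ⟨s, t, hw⟩ := h
  have h1 : f ++ t = (List.replicate p false ++ List.replicate q true).drop s.length := by
    rw [← hw]; simp
  have h2 : f = ((List.replicate p false ++ List.replicate q true).drop s.length).take
      f.length := by
    rw [← h1, List.take_left]
  rw [List.drop_append, List.drop_replicate, List.drop_replicate,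
      List.take_append, List.take_replicate, List.take_replicate] at h2
  exact ⟨_, _, h2⟩

private lemma no_meso_zeros_ones (a b : ℕ) :
    ¬ Mesosome (List.replicate a false ++ List.replicate b true) := by
  rintro ⟨x, x', hf, hconj, hne, hnil⟩
  have hlen := conj_length hconj
  have hcnt := conj_count hconj true
  set n := x.length with hn
  have hx : x = (List.replicate a false ++ List.replicate b true).take n := by
    rw [hf, hn, List.take_left]
  have hx' : x' = (List.replicate a false ++ List.replicate b true).drop n := by
    rw [hf, hn, List.drop_left]
  have hab : a + b = n + n := by
    have := congrArg List.length hf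
    simp [hlen] at this
    omega
  rw [List.take_append, List.take_replicate, List.length_replicate,
      List.take_replicate] at hx
  rw [List.drop_append, List.drop_replicate, List.length_replicate,
      List.drop_replicate] at hx'
  have hcx : x.count true = min (n - a) b := by
    rw [hx]; simp [List.count_append, List.count_replicate]
  have hcx' : x'.count true = b - (n - a) := by
    rw [hx']; simp [List.count_append, List.count_replicate]
  have hz : a = 0 ∨ b = 0 := by omega
  apply hne
  rcases hz with rfl | rfl
  · -- all ones : x = x' = 1^n
    have hb : b = n + n := by omega
    rw [hx', hx]
    simp [hb]
  · -- all zeros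
    have ha : a = n + n := by omega
    rw [hx', hx]
    simp [ha]

private lemma key (p q : ℕ) {f : List Bool}
    (h : f <:+: List.replicate p false ++ List.replicate q true) : ¬ Mesosome f := by
  obtain ⟨a, b, rfl⟩ := infix_struct h
  exact no_meso_zeros_ones a b

/-- If the part after `f` still contains a `true`, then `f` is an infix of `0^i 1^j`. -/
private lemma prefix_side {i j k : ℕ} {s f t : List Bool}
    (hw : s ++ f ++ t =
      (List.replicate i false ++ List.replicate j true) ++ List.replicate k false)
    (ht : 0 < t.count true) :
    f <:+: List.replicate i false ++ List.replicate j true := by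
  have hlen : s.length + f.length + t.length = i + j + k := by
    have := congrArg List.length hw
    simp at this
    omega
  have hkt : k < t.length := by
    by_contra hle
    push_neg at hle
    have hm : i + j ≤ s.length + f.length := by omega
    have hteq : t = ((List.replicate i false ++ List.replicate j true) ++
        List.replicate k false).drop (s.length + f.length) := by
      rw [← hw]
      rw [show s ++ f ++ t = (s ++ f) ++ t by simp, List.drop_left']
      simp
    rw [List.drop_append, List.drop_append,
        List.drop_replicate, List.drop_replicate, List.drop_replicate] at hteq
    have : t.count true = 0 := by
      rw [hteq]
      simp [List.count_append, List.count_replicate]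
      omega
    omega
  have hpre : s ++ f <+: List.replicate i false ++ List.replicate j true := by
    apply List.prefix_of_prefix_length_le (l₃ :=
      (List.replicate i false ++ List.replicate j true) ++ List.replicate k false)
    · exact ⟨t, by rw [← hw]⟩
    · exact ⟨List.replicate k false, rfl⟩
    · simp only [List.length_append, List.length_replicate]; omega
  exact List.IsInfix.trans ⟨s, [], by simp⟩ hpre.isInfix

theorem stmt0 (i j k : ℕ) (hi : 1 ≤ i) (hj : 1 ≤ j) (hk : 1 ≤ k) :
    MesosomeFree (List.replicate i false ++ List.replicate j true ++ List.replicate k false)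
      ↔ Odd j := by
  constructor
  · intro hfree
    by_contra hodd
    rw [Nat.not_odd_iff_even] at hodd
    obtain ⟨m, hm⟩ := hodd
    have hm1 : 1 ≤ m := by omega
    apply hfree ([false] ++ List.replicate j true ++ [false])
    · refine ⟨List.replicate (i - 1) false, List.replicate (k - 1) false, ?_⟩
      have h1 : List.replicate (i-1) false ++ [false] = List.replicate i false := by
        rw [← List.replicate_succ']; congr 1; omega
      have h2 : [false] ++ List.replicate (k-1) false = List.replicate k false := by
        rw [List.singleton_append, ← List.replicate_succ]; congr 1; omega
      calc List.replicate (i-1) false ++ ([false] ++ List.replicate j true ++ [false]) ++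
            List.replicate (k-1) false
          = (List.replicate (i-1) false ++ [false]) ++ List.replicate j true ++
            ([false] ++ List.replicate (k-1) false) := by simp
        _ = _ := by rw [h1, h2]
    · refine ⟨false :: List.replicate m true, List.replicate m true ++ [false], ?_,
        ⟨[false], List.replicate m true, rfl, rfl⟩, ?_, by simp⟩
      · rw [hm, List.replicate_add]
        simp only [List.singleton_append, List.cons_append, List.append_assoc, List.nil_append]
      · intro h
        have : (List.replicate m true ++ [false]).head? = (false :: List.replicate m true).head? :=
          by rw [h]
        rcases m with _ | m
        · omega
        · simp [List.replicate_succ] at this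
  · intro hodd f hinf hmes
    obtain ⟨c, hc⟩ := meso_count_even hmes
    have hle : f.count true ≤ j := by
      have hsub := hinf.sublist
      have := hsub.count_le true
      simpa [List.count_append, List.count_replicate] using this
    rcases eq_or_lt_of_le hle with heq | hlt
    · obtain ⟨m, hm⟩ := hodd; omega
    · obtain ⟨s, t, hw⟩ := hinf
      rw [List.append_assoc (List.replicate i false)] at hw
      rw [← List.append_assoc] at hw
      have hj' : s.count true + f.count true + t.count true = j := by
        have h := congrArg (List.count true) hw
        simp [List.count_append, List.count_replicate] at h
        omega
      have hst : 0 < t.count true ∨ 0 < s.count true := by omega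
      rcases hst with ht | hs
      · exact key i j (prefix_side hw ht) hmes
      · have hw' : t.reverse ++ f.reverse ++ s.reverse =
            (List.replicate k false ++ List.replicate j true) ++ List.replicate i false := by
          have := congrArg List.reverse hw
          simpa using this
        have hs' : 0 < s.reverse.count true := by simpa [List.count_reverse] using hs
        exact key k j (prefix_side hw' hs') (meso_reverse hmes)
end

section
/- For every i, j ≥ 1, the word 0^i 1 0 1^j is mesosome-free. -/
lemma take_two (m : ℕ) (a b : Bool) (l : List Bool) :
    (a :: b :: l).take (m + 2) = a :: b :: l.take m := rfl

lemma drop_two (m : ℕ) (a b : Bool) (l : List Bool) :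
    (a :: b :: l).drop (m + 2) = l.drop m := rfl

/-- Shapes of factors of `0^i 1 0 1^j` (a superset, closed under take/drop). -/
def Good (f : List Bool) : Prop :=
  (∃ a b, f = List.replicate a false ++ List.replicate b true) ∨
  (∃ a b, f = List.replicate a false ++ ([true, false] ++ List.replicate b true))

lemma good_take (f : List Bool) (k : ℕ) (h : Good f) : Good (f.take k) := by
  rcases h with ⟨a, b, rfl⟩ | ⟨a, b, rfl⟩
  · exact Or.inl ⟨min k a, min (k - a) b,
      by simp [List.take_append, List.take_replicate]⟩
  · by_cases h1 : k ≤ a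
    · refine Or.inl ⟨k, 0, ?_⟩
      have e : k - a = 0 := by omega
      simp [List.take_append, List.take_replicate, e, Nat.min_eq_left h1]
    · by_cases h2 : k = a + 1
      · subst h2
        refine Or.inl ⟨a, 1, ?_⟩
        have e : a + 1 - a = 1 := by omega
        have e2 : min (a + 1) a = a := by omega
        simp [List.take_append, List.take_replicate, e, e2]
      · have h3 : a + 2 ≤ k := by omega
        obtain ⟨m, hm⟩ : ∃ m, k - a = m + 2 := ⟨k - a - 2, by omega⟩
        have e2 : k ⊓ a = a := by omega
        refine Or.inr ⟨a, min m b, ?_⟩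
        rw [List.take_append, List.take_append,
          List.length_replicate, hm, take_two, List.take_replicate, List.take_replicate, e2]
        simp
lemma good_drop (f : List Bool) (k : ℕ) (h : Good f) : Good (f.drop k) := by
  rcases h with ⟨a, b, rfl⟩ | ⟨a, b, rfl⟩
  · exact Or.inl ⟨a - k, b - (k - a),
      by simp [List.drop_append, List.drop_replicate]⟩
  · by_cases h1 : k ≤ a
    · refine Or.inr ⟨a - k, b, ?_⟩
      have e : k - a = 0 := by omega
      simp [List.drop_append, List.drop_replicate, e]
    · by_cases h2 : k = a + 1
      · subst h2
        refine Or.inl ⟨1, b, ?_⟩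
        have e : a + 1 - a = 1 := by omega
        have e2 : a - (a + 1) = 0 := by omega
        simp [List.drop_append, List.drop_replicate, e, e2,
          List.replicate_succ]
      · have h3 : a + 2 ≤ k := by omega
        obtain ⟨m, hm⟩ : ∃ m, k - a = m + 2 := ⟨k - a - 2, by omega⟩
        have e2 : a - k = 0 := by omega
        refine Or.inl ⟨0, b - m, ?_⟩
        rw [List.drop_append, List.drop_append,
          List.length_replicate, hm, drop_two, List.drop_replicate, e2]
        simp [List.drop_replicate]

lemma good_infix {f w : List Bool} (h : f <:+: w) (hw : Good w) : Good f := by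
  obtain ⟨t, hpre, hsuf⟩ := List.infix_iff_prefix_suffix.mp h
  obtain ⟨s, rfl⟩ := hsuf
  have h1 : Good ((s ++ t).drop s.length) := good_drop _ _ hw
  have h2 : t = (s ++ t).drop s.length := by simp
  rw [← h2] at h1
  rw [List.prefix_iff_eq_take.mp hpre]
  exact good_take _ _ h1

theorem stmt1 (i j : ℕ) (hi : 1 ≤ i) (hj : 1 ≤ j) :
    MesosomeFree (List.replicate i false ++ [true, false] ++ List.replicate j true) := by
  intro f hinf hm
  obtain ⟨x, x', hf, ⟨u, v, hu, hv⟩, hne, hxne⟩ := hm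
  have hgoodw : Good (List.replicate i false ++ [true, false] ++ List.replicate j true) :=
    Or.inr ⟨i, j, by rw [List.append_assoc]⟩
  have hgood : Good f := good_infix hinf hgoodw
  have hlen : x'.length = x.length := by rw [hu, hv]; simp [Nat.add_comm]
  have hcnt : x'.count true = x.count true := by
    rw [hu, hv]; simp [List.count_append, Nat.add_comm]
  have hxt : x = f.take x.length := by rw [hf]; simp
  have hx't : x' = f.drop x.length := by rw [hf]; simp
  have hpos : 0 < x.length := List.length_pos_iff.mpr hxne
  have hsum : f.count true = x.count true + x'.count true := by
    rw [hf]; simp [List.count_append]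
  have hflen : f.length = x.length + x'.length := by rw [hf]; simp
  set n := x.length with hn
  rcases hgood with ⟨a, b, hab⟩ | ⟨a, b, hab⟩
  · -- f = 0^a ++ 1^b
    have hlf : f.length = a + b := by rw [hab]; simp
    have hcf : f.count true = b := by
      rw [hab]; simp [List.count_append, List.count_replicate]
    by_cases h1 : n ≤ a
    · -- x is all zeros, so b = 0, so x = x'
      have e1 : n - a = 0 := by omega
      have e2 : n ⊓ a = n := by omega
      have hx2 : f.take n = List.replicate n false := by
        rw [hab, List.take_append, List.length_replicate, e1,
          List.take_replicate, e2]
        simp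
      have hcx : x.count true = 0 := by
        rw [hxt, hx2]; simp [List.count_replicate]
      have hb : b = 0 := by omega
      have e3 : a - n = n := by omega
      have hx'2 : f.drop n = List.replicate n false := by
        rw [hab, hb, List.drop_append, List.length_replicate,
          List.drop_replicate, e3]
        simp
      exact hne ((hx't.trans hx'2).trans (hxt.trans hx2).symm)
    · -- x = 0^a 1^(n-a), x' = 1^n ⇒ a = 0 ⇒ x = x'
      have e1 : n ⊓ a = a := by omega
      have e2 : (n - a) ⊓ b = n - a := by omega
      have hx2 : f.take n =
          List.replicate a false ++ List.replicate (n - a) true := by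
        rw [hab, List.take_append, List.length_replicate,
          List.take_replicate, List.take_replicate, e1, e2]
      have e3 : a - n = 0 := by omega
      have e4 : b - (n - a) = n := by omega
      have hx'2 : f.drop n = List.replicate n true := by
        rw [hab, List.drop_append, List.length_replicate,
          List.drop_replicate, List.drop_replicate, e3, e4]
        simp
      have hcx : x.count true = n - a := by
        rw [hxt, hx2]; simp [List.count_append, List.count_replicate]
      have hcx' : x'.count true = n := by
        rw [hx't, hx'2]; simp [List.count_replicate]
      have ha : a = 0 := by omega
      apply hne
      rw [hx't.trans hx'2, hxt.trans hx2, ha]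
      simp
  · -- f = 0^a ++ [1,0] ++ 1^b
    have hlf : f.length = a + 2 + b := by rw [hab]; simp; omega
    have hcf : f.count true = b + 1 := by
      rw [hab]; simp [List.count_append, List.count_replicate]
    by_cases h1 : n ≤ a
    · -- x all zeros : contradiction with counts
      have e1 : n - a = 0 := by omega
      have e2 : n ⊓ a = n := by omega
      have hx2 : f.take n = List.replicate n false := by
        rw [hab, List.take_append, List.length_replicate, e1,
          List.take_replicate, e2]
        simp
      have hcx : x.count true = 0 := by
        rw [hxt, hx2]; simp [List.count_replicate]
      omega
    · by_cases h2 : n = a + 1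
      · -- x = 0^a 1, forces a = 1, b = 1, x = x' = [0,1]
        have e1 : n - a = 1 := by omega
        have e2 : n ⊓ a = a := by omega
        have hx2 : f.take n = List.replicate a false ++ [true] := by
          rw [hab, List.take_append, List.take_append,
            List.length_replicate, e1, List.take_replicate, e2]
          simp
        have hcx : x.count true = 1 := by
          rw [hxt, hx2]; simp [List.count_append, List.count_replicate]
        have hb : b = 1 := by omega
        have ha : a = 1 := by omega
        have hx'2 : f.drop n = List.replicate a false ++ [true] := by
          rw [hab, h2, ha, hb]
          rfl
        exact hne ((hx't.trans hx'2).trans (hxt.trans hx2).symm)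
      · -- x' = 1^n with n > count x : contradiction
        have h3 : a + 2 ≤ n := by omega
        obtain ⟨m, hm⟩ : ∃ m, n - a = m + 2 := ⟨n - a - 2, by omega⟩
        have e2 : a - n = 0 := by omega
        have hx'2 : f.drop n = List.replicate (b - m) true := by
          rw [hab, List.drop_append, List.drop_append,
            List.length_replicate, hm, drop_two, List.drop_replicate, e2]
          simp [List.drop_replicate]
        have hcx' : x'.count true = b - m := by
          rw [hx't, hx'2]; simp [List.count_replicate]
        have hl' : x'.length = b - m := by rw [hx't, hx'2]; simp
        omega
end

section
/- For i, j, k, ℓ ≥ 1, the word 0^i 1^j 0^k 1^ℓ is mesosome-free if and only if either (a) j = k = 1, or (b) i < k, j > ℓ, and both j and k are odd. -/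
section Aux
open List

abbrev R (n : ℕ) : List Bool := List.replicate n false
abbrev T (n : ℕ) : List Bool := List.replicate n true

lemma take4 (n a b c d : ℕ) :
    (R a ++ T b ++ R c ++ T d).take n =
      R (min n a) ++ T (min (n - a) b) ++ R (min (n - a - b) c) ++ T (min (n - a - b - c) d) := by
  simp [take_append, take_replicate, Nat.sub_sub, Nat.min_comm]

lemma drop4 (n a b c d : ℕ) :
    (R a ++ T b ++ R c ++ T d).drop n =
      R (a - n) ++ T (b - (n - a)) ++ R (c - (n - a - b)) ++ T (d - (n - a - b - c)) := by
  simp [drop_append, drop_replicate, Nat.sub_sub]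

lemma fact (i j k l : ℕ) (f : List Bool) (h : f <:+: R i ++ T j ++ R k ++ T l) :
    ∃ a b c d : ℕ, f = R a ++ T b ++ R c ++ T d ∧ a ≤ i ∧ d ≤ l ∧
      (1 ≤ a → 1 ≤ c → b = j) ∧ (1 ≤ b → 1 ≤ d → c = k) := by
  obtain ⟨s, t, hst⟩ := h
  have hf : f = ((R i ++ T j ++ R k ++ T l).drop s.length).take f.length := by
    rw [← hst, append_assoc, drop_left, take_left]
  rw [drop4, take4] at hf
  set p := s.length
  set m := f.length
  refine ⟨_, _, _, _, hf, ?_, ?_, ?_, ?_⟩ <;> omega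

set_option maxHeartbeats 1200000 in
lemma bwd (i j k l : ℕ) (hi : 1 ≤ i) (hj : 1 ≤ j) (hk : 1 ≤ k) (hl : 1 ≤ l)
    (hcond : (j = 1 ∧ k = 1) ∨ (i < k ∧ l < j ∧ Odd j ∧ Odd k)) :
    MesosomeFree (R i ++ T j ++ R k ++ T l) := by
  intro f hf hm
  obtain ⟨a, b, c, d, hf4, hai, hdl, himp1, himp2⟩ := fact i j k l f hf
  obtain ⟨x, x', hfx, ⟨u, v, hu, hv⟩, hne, hxnil⟩ := hm
  obtain ⟨n, hn⟩ : ∃ n, n = x.length := ⟨_, rfl⟩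
  have hx : x = f.take n := by rw [hfx, hn, take_left]
  have hx' : x' = f.drop n := by rw [hfx, hn, drop_left]
  have hn1 : 1 ≤ n := by rw [hn]; exact length_pos_iff.mpr hxnil
  have hsum : a + b + c + d = 2 * n := by
    have h1 : x'.length = n := by rw [hn, hu, hv]; simp; omega
    have h2 : f.length = x.length + x'.length := by rw [hfx]; simp
    rw [hf4] at h2; simp at h2; omega
  have hc0 : x.count false = x'.count false := by rw [hu, hv]; simp [count_append]; omega
  have hc1 : x.count true = x'.count true := by rw [hu, hv]; simp [count_append]; omega
  rw [hx, hf4, take4] at hc0 hc1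
  rw [hx', hf4, drop4] at hc0 hc1
  simp [count_append, count_replicate] at hc0 hc1
  by_cases hbd : b = 0 ∧ d = 0
  · apply hne
    rw [hx, hx', hf4, hbd.1, hbd.2]
    simp [take_replicate, drop_replicate]
    omega
  by_cases hac : a = 0 ∧ c = 0
  · apply hne
    rw [hx, hx', hf4, hac.1, hac.2]
    simp [take_replicate, drop_replicate]
    omega
  clear hfx hu hv hxnil hf hn
  rcases hcond with ⟨hj1, hk1⟩ | ⟨hik, hlj, ⟨mj, hmj⟩, ⟨mk, hmk⟩⟩
  · have hvals : a = 1 ∧ b = 1 ∧ c = 1 ∧ d = 1 ∧ n = 2 := by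
      clear hx hx' hne hf4
      omega
    obtain ⟨ha, hb, hc, hd, hn2⟩ := hvals
    subst ha hb hc hd hn2 hf4
    apply hne
    rw [hx, hx']
    decide
  · clear hx hx' hne hf4
    omega

lemma rsplit (p q r : ℕ) (h : p = q + r) : R p = R q ++ R r := by
  subst h
  show List.replicate (q + r) false = List.replicate q false ++ List.replicate r false
  rw [List.replicate_add]

lemma tsplit (p q r : ℕ) (h : p = q + r) : T p = T q ++ T r := by
  subst h
  show List.replicate (q + r) true = List.replicate q true ++ List.replicate r true
  rw [List.replicate_add]

lemma ne4' (m a b c d a' b' c' d' : ℕ)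
    (h : min m a + min (m - a - b) c ≠ min m a' + min (m - a' - b') c') :
    R a ++ T b ++ R c ++ T d ≠ R a' ++ T b' ++ R c' ++ T d' := by
  intro he
  apply_fun (fun z => (z.take m).count false) at he
  rw [take4, take4] at he
  simp [count_append, count_replicate] at he
  exact h he

lemma mes_uv (w : List Bool) (u v s t : List Bool)
    (hw : s ++ ((u ++ v) ++ (v ++ u)) ++ t = w)
    (hne : v ++ u ≠ u ++ v) (hnil : u ++ v ≠ []) : ¬ MesosomeFree w := fun hfree =>
  hfree ((u ++ v) ++ (v ++ u)) ⟨s, t, hw⟩ ⟨u ++ v, v ++ u, rfl, ⟨u, v, rfl, rfl⟩, hne, hnil⟩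

-- j even : mesosome 0 1^j 0
lemma mesJ (i j k l m : ℕ) (hi : 1 ≤ i) (hk : 1 ≤ k) (hm : 1 ≤ m) (hj : j = m + m) :
    ¬ MesosomeFree (R i ++ T j ++ R k ++ T l) := by
  apply mes_uv _ (R 1) (T m) (R (i - 1)) (R (k - 1) ++ T l)
  · rw [rsplit i (i-1) 1 (by omega), rsplit k 1 (k-1) (by omega), tsplit j m m hj]
    simp only [append_assoc]
  · have e1 : T m ++ R 1 = R 0 ++ T m ++ R 1 ++ T 0 := by simp
    have e2 : R 1 ++ T m = R 1 ++ T m ++ R 0 ++ T 0 := by simp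
    rw [e1, e2]
    exact ne4' 1 _ _ _ _ _ _ _ _ (by omega)
  · intro h
    apply congrArg List.length at h
    simp at h
-- k even : mesosome 1 0^k 1
lemma mesK (i j k l m : ℕ) (hj : 1 ≤ j) (hl : 1 ≤ l) (hm : 1 ≤ m) (hk : k = m + m) :
    ¬ MesosomeFree (R i ++ T j ++ R k ++ T l) := by
  apply mes_uv _ (T 1) (R m) (R i ++ T (j - 1)) (T (l - 1))
  · rw [tsplit j (j-1) 1 (by omega), tsplit l 1 (l-1) (by omega), rsplit k m m hk]
    simp only [append_assoc]
  · have e1 : R m ++ T 1 = R m ++ T 1 ++ R 0 ++ T 0 := by simp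
    have e2 : T 1 ++ R m = R 0 ++ T 1 ++ R m ++ T 0 := by simp
    rw [e1, e2]
    exact ne4' 1 _ _ _ _ _ _ _ _ (by omega)
  · intro h
    apply congrArg List.length at h
    simp at h
-- type A : 0^k 1^j 0^k 1 with k ≤ i, j = 2q+1 ≥ 3
lemma mesA (i j k l q : ℕ) (hki : k ≤ i) (hk : 1 ≤ k) (hl : 1 ≤ l) (hq : 1 ≤ q)
    (hj : j = q + q + 1) :
    ¬ MesosomeFree (R i ++ T j ++ R k ++ T l) := by
  apply mes_uv _ (R k ++ T 1) (T q) (R (i - k)) (T (l - 1))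
  · rw [rsplit i (i-k) k (by omega), tsplit l 1 (l-1) (by omega), tsplit j 1 (q+q) (by omega),
      tsplit (q+q) q q rfl]
    simp only [append_assoc]
  · have e1 : T q ++ (R k ++ T 1) = R 0 ++ T q ++ R k ++ T 1 := by simp
    have e2 : (R k ++ T 1) ++ T q = R k ++ T (1 + q) ++ R 0 ++ T 0 := by
      rw [tsplit (1+q) 1 q rfl]; simp
    rw [e1, e2]
    exact ne4' 1 _ _ _ _ _ _ _ _ (by omega)
  · intro h
    apply congrArg List.length at h
    simp at h
-- type B : 0 1^j 0^k 1^j with j ≤ l, k = 2q+1 ≥ 3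
lemma mesB (i j k l q : ℕ) (hjl : j ≤ l) (hi : 1 ≤ i) (hj : 1 ≤ j) (hq : 1 ≤ q)
    (hk : k = q + q + 1) :
    ¬ MesosomeFree (R i ++ T j ++ R k ++ T l) := by
  apply mes_uv _ (R 1 ++ T j) (R q) (R (i - 1)) (T (l - j))
  · rw [rsplit i (i-1) 1 (by omega), tsplit l j (l-j) (by omega), rsplit k (q+q) 1 (by omega),
      rsplit (q+q) q q rfl]
    simp only [append_assoc]
  · have e1 : R q ++ (R 1 ++ T j) = R (q + 1) ++ T j ++ R 0 ++ T 0 := by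
      rw [rsplit (q+1) q 1 rfl]; simp
    have e2 : (R 1 ++ T j) ++ R q = R 1 ++ T j ++ R q ++ T 0 := by simp
    rw [e1, e2]
    exact ne4' 2 _ _ _ _ _ _ _ _ (by omega)
  · intro h
    apply congrArg List.length at h
    simp at h

lemma fwd (i j k l : ℕ) (hi : 1 ≤ i) (hj : 1 ≤ j) (hk : 1 ≤ k) (hl : 1 ≤ l)
    (hfree : MesosomeFree (R i ++ T j ++ R k ++ T l)) :
    (j = 1 ∧ k = 1) ∨ (i < k ∧ l < j ∧ Odd j ∧ Odd k) := by
  by_contra hR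
  push_neg at hR
  rcases Nat.even_or_odd j with ⟨m, hm⟩ | hjo
  · exact mesJ i j k l m hi hk (by omega) hm hfree
  rcases Nat.even_or_odd k with ⟨m, hm⟩ | hko
  · exact mesK i j k l m hj hl (by omega) hm hfree
  obtain ⟨h1, h2⟩ := hR
  have h3 : k ≤ i ∨ j ≤ l := by
    rcases le_or_gt k i with h | h
    · exact Or.inl h
    · right
      by_contra hc
      exact h2 h (by omega) hjo hko
  obtain ⟨qj, hqj⟩ := hjo
  obtain ⟨qk, hqk⟩ := hko
  rcases h3 with h3 | h3
  · rcases le_or_gt 2 j with hj2 | hj2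
    · exact mesA i j k l qj h3 hk hl (by omega) (by omega) hfree
    · exact mesB i j k l qk (by omega) hi hj (by omega) (by omega) hfree
  · rcases le_or_gt 2 k with hk2 | hk2
    · exact mesB i j k l qk h3 hi hj (by omega) (by omega) hfree
    · exact mesA i j k l qj (by omega) hk hl (by omega) (by omega) hfree

end Aux

theorem stmt2 (i j k l : ℕ) (hi : 1 ≤ i) (hj : 1 ≤ j) (hk : 1 ≤ k) (hl : 1 ≤ l) :
    MesosomeFree (List.replicate i false ++ List.replicate j true ++
        List.replicate k false ++ List.replicate l true)
      ↔ (j = 1 ∧ k = 1) ∨ (i < k ∧ l < j ∧ Odd j ∧ Odd k) := by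
  constructor
  · exact fwd i j k l hi hj hk hl
  · exact bwd i j k l hi hj hk hl
end

section
/- For i, j, k, ℓ ≥ 1, the word 0^i 1^j 0^k 1^ℓ is minimal forbidden for mesosome-avoidance if and only if j and k are odd and either (a) j > 1, ℓ = 1, and i = k, or (b) k > 1, i = 1, and j = ℓ. -/
/-- `w` is minimal forbidden: it is a mesosome, but no proper factor of it is. -/
def MinimalForbidden (w : List Bool) : Prop :=
  Mesosome w ∧ ∀ f : List Bool, f <:+: w → f ≠ w → ¬ Mesosome f

namespace MesoAux

/-- The 4-block word `0^a 1^b 0^c 1^d`. -/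
def Wd (a b c d : ℕ) : List Bool :=
  List.replicate a false ++ List.replicate b true ++ List.replicate c false ++ List.replicate d true

lemma rep_rep (m n : ℕ) (x : Bool) (L : List Bool) :
    List.replicate m x ++ (List.replicate n x ++ L) = List.replicate (m + n) x ++ L := by
  rw [← List.append_assoc, ← List.replicate_add]

lemma rep_rep' (m n : ℕ) (x : Bool) :
    List.replicate m x ++ List.replicate n x = List.replicate (m + n) x :=
  (List.replicate_add m n x).symm

lemma Wd_eq_ext {a b c d a' b' c' d' : ℕ} (h1 : a = a') (h2 : b = b') (h3 : c = c') (h4 : d = d') :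
    Wd a b c d = Wd a' b' c' d' := by subst h1; subst h2; subst h3; subst h4; rfl

lemma take_Wd (a b c d m : ℕ) :
    (Wd a b c d).take m = Wd (min m a) (min (m-a) b) (min (m-a-b) c) (min (m-a-b-c) d) := by
  simp [Wd, List.take_append, List.take_replicate]

lemma drop_Wd (a b c d m : ℕ) :
    (Wd a b c d).drop m = Wd (a-m) (b-(m-a)) (c-(m-a-b)) (d-(m-a-b-c)) := by
  simp [Wd, List.drop_append, List.drop_replicate]

lemma count_false_Wd (a b c d : ℕ) : (Wd a b c d).count false = a + c := by
  simp [Wd, List.count_append, List.count_replicate]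

lemma count_true_Wd (a b c d : ℕ) : (Wd a b c d).count true = b + d := by
  simp [Wd, List.count_append, List.count_replicate]

lemma length_Wd (a b c d : ℕ) : (Wd a b c d).length = a + b + c + d := by
  simp [Wd]; ring

lemma Wd_merge0 (x y : ℕ) : Wd x 0 y 0 = Wd (x+y) 0 0 0 := by
  simp [Wd, ← List.replicate_add]

lemma Wd_merge1 (x y : ℕ) : Wd 0 x 0 y = Wd 0 (x+y) 0 0 := by
  simp [Wd, ← List.replicate_add]

lemma Wd_shift00 (x y : ℕ) : Wd 0 0 x y = Wd x y 0 0 := by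
  simp [Wd]

lemma Wd_shift3 (x : ℕ) : Wd 0 0 0 x = Wd 0 x 0 0 := by
  simp [Wd]

lemma ne01 (s t : ℕ) (hs : 0 < s) (ht : 0 < t) (u v : List Bool) :
    List.replicate s true ++ u ≠ List.replicate t false ++ v := by
  obtain ⟨s', rfl⟩ := Nat.exists_eq_succ_of_ne_zero hs.ne'
  obtain ⟨t', rfl⟩ := Nat.exists_eq_succ_of_ne_zero ht.ne'
  simp [List.replicate_succ]

lemma meso_mpr1 (a b c d : ℕ) (ha : 0 < a) (hac : a = c) (hdb : d < b) (hpar : (b + d) % 2 = 0) :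
    Mesosome (Wd a b c d) := by
  subst hac
  set p := (b + d) / 2 with hp
  have hp2 : p + p = b + d := by omega
  have hdp : d < p := by omega
  have hpb : p < b := by omega
  refine ⟨List.replicate a false ++ List.replicate p true,
         List.replicate (b - p) true ++ (List.replicate a false ++ List.replicate d true),
         ?_, ⟨List.replicate a false ++ List.replicate d true, List.replicate (b - p) true, ?_, rfl⟩,
         ?_, ?_⟩
  · simp [Wd, List.append_assoc, rep_rep, rep_rep', show p + (b - p) = b by omega]
  · simp [List.append_assoc, rep_rep, rep_rep', show d + (b - p) = p by omega]
  · exact ne01 _ _ (by omega) (by omega) _ _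
  · intro h
    have := congrArg List.length h
    simp at this
    omega

lemma meso_mpr2 (a b c d : ℕ) (hb : 0 < b) (hbd : b = d) (hac : a < c) (hpar : (a + c) % 2 = 0) :
    Mesosome (Wd a b c d) := by
  subst hbd
  set q := (c - a) / 2 with hq
  have hq2 : q + (q + a) = c := by omega
  have hq0 : 0 < q := by omega
  refine ⟨List.replicate a false ++ List.replicate b true ++ List.replicate q false,
         List.replicate q false ++ (List.replicate a false ++ List.replicate b true),
         ?_, ⟨List.replicate a false ++ List.replicate b true, List.replicate q false, by
            simp [List.append_assoc], rfl⟩,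
         ?_, ?_⟩
  · simp [Wd, List.append_assoc, rep_rep, rep_rep']; omega
  · intro h
    have := congrArg (fun L => (List.take (a + 1) L).count true) h
    simp only [List.take_append, List.take_replicate, List.count_append,
      List.count_replicate, List.length_replicate, List.length_append] at this
    simp at this
    omega
  · intro h
    have := congrArg List.length h
    simp at this
    omega

set_option maxHeartbeats 1000000 in
lemma meso_mp (a b c d : ℕ) (h : Mesosome (Wd a b c d)) :
    (0 < a ∧ a = c ∧ d < b ∧ (b+d) % 2 = 0) ∨ (0 < b ∧ b = d ∧ a < c ∧ (a+c) % 2 = 0) := by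
  obtain ⟨x, x', hw, ⟨u, v, huv, hvu⟩, hne, hx0⟩ := h
  set m := x.length with hm
  have h2m : m + m = a + b + c + d := by
    have h1 := congrArg List.length hw
    rw [length_Wd] at h1
    have h2 : x'.length = m := by rw [hm, huv, hvu]; simp [List.length_append]; omega
    simp [List.length_append, h2] at h1
    omega
  have hx : x = (Wd a b c d).take m := by rw [hw]; exact List.take_left.symm
  have hx' : x' = (Wd a b c d).drop m := by rw [hw]; exact List.drop_left.symm
  rw [take_Wd] at hx
  rw [drop_Wd] at hx'
  have hc0 : min m a + min (m-a-b) c = (a-m) + (c-(m-a-b)) := by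
    have h1 : x.count false = x'.count false := by
      rw [huv, hvu]; simp [List.count_append]; omega
    rw [hx, hx', count_false_Wd, count_false_Wd] at h1
    exact h1
  have hc1 : min (m-a) b + min (m-a-b-c) d = (b-(m-a)) + (d-(m-a-b-c)) := by
    have h1 : x.count true = x'.count true := by
      rw [huv, hvu]; simp [List.count_append]; omega
    rw [hx, hx', count_true_Wd, count_true_Wd] at h1
    exact h1
  rcases le_or_gt m a with h1 | h1
  · exfalso
    apply hne
    calc x' = Wd (a-m) 0 (c-(m-a-b)) 0 := by
          rw [hx']; exact Wd_eq_ext rfl (by omega) rfl (by omega)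
      _ = Wd ((a-m)+(c-(m-a-b))) 0 0 0 := Wd_merge0 _ _
      _ = Wd (min m a) (min (m-a) b) (min (m-a-b) c) (min (m-a-b-c) d) :=
          Wd_eq_ext (by omega) (by omega) (by omega) (by omega)
      _ = x := hx.symm
  rcases le_or_gt m (a+b) with h2 | h2
  · rcases Nat.eq_zero_or_pos a with ha0 | ha0
    · exfalso
      apply hne
      calc x' = Wd 0 (b-(m-a)) 0 (d-(m-a-b-c)) := by
            rw [hx']; exact Wd_eq_ext (by omega) rfl (by omega) rfl
        _ = Wd 0 ((b-(m-a))+(d-(m-a-b-c))) 0 0 := Wd_merge1 _ _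
        _ = Wd (min m a) (min (m-a) b) (min (m-a-b) c) (min (m-a-b-c) d) :=
            Wd_eq_ext (by omega) (by omega) (by omega) (by omega)
        _ = x := hx.symm
    by_cases hm2 : m = a + b
    · exfalso
      apply hne
      calc x' = Wd 0 0 (c-(m-a-b)) (d-(m-a-b-c)) := by
            rw [hx']; exact Wd_eq_ext (by omega) (by omega) rfl rfl
        _ = Wd (c-(m-a-b)) (d-(m-a-b-c)) 0 0 := Wd_shift00 _ _
        _ = Wd (min m a) (min (m-a) b) (min (m-a-b) c) (min (m-a-b-c) d) :=
            Wd_eq_ext (by omega) (by omega) (by omega) (by omega)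
        _ = x := hx.symm
    · left
      refine ⟨ha0, ?_, ?_, ?_⟩ <;> omega
  rcases le_or_gt m (a+b+c) with h3 | h3
  · rcases Nat.eq_zero_or_pos b with hb0 | hb0
    · exfalso
      apply hne
      have e1 : x = Wd ((min m a) + (min (m-a-b) c)) 0 0 0 := by
        rw [hx]
        calc Wd (min m a) (min (m-a) b) (min (m-a-b) c) (min (m-a-b-c) d)
            = Wd (min m a) 0 (min (m-a-b) c) 0 := Wd_eq_ext rfl (by omega) rfl (by omega)
          _ = Wd ((min m a) + (min (m-a-b) c)) 0 0 0 := Wd_merge0 _ _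
      calc x' = Wd 0 0 (c-(m-a-b)) (d-(m-a-b-c)) := by
            rw [hx']; exact Wd_eq_ext (by omega) (by omega) rfl rfl
        _ = Wd (c-(m-a-b)) (d-(m-a-b-c)) 0 0 := Wd_shift00 _ _
        _ = Wd ((min m a) + (min (m-a-b) c)) 0 0 0 :=
            Wd_eq_ext (by omega) (by omega) rfl rfl
        _ = x := e1.symm
    · right
      refine ⟨hb0, ?_, ?_, ?_⟩ <;> omega
  · exfalso
    apply hne
    have e1 : x = Wd 0 ((min (m-a) b) + (min (m-a-b-c) d)) 0 0 := by
      rw [hx]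
      calc Wd (min m a) (min (m-a) b) (min (m-a-b) c) (min (m-a-b-c) d)
          = Wd 0 (min (m-a) b) 0 (min (m-a-b-c) d) := Wd_eq_ext (by omega) rfl (by omega) rfl
        _ = Wd 0 ((min (m-a) b) + (min (m-a-b-c) d)) 0 0 := Wd_merge1 _ _
    calc x' = Wd 0 0 0 (d-(m-a-b-c)) := by
          rw [hx']; exact Wd_eq_ext (by omega) (by omega) (by omega) rfl
      _ = Wd 0 (d-(m-a-b-c)) 0 0 := Wd_shift3 _
      _ = Wd 0 ((min (m-a) b) + (min (m-a-b-c) d)) 0 0 :=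
          Wd_eq_ext rfl (by omega) rfl rfl
      _ = x := e1.symm

lemma slice_infix (w : List Bool) (p q : ℕ) : (w.drop p).take q <:+: w :=
  ((w.drop p).take_prefix q).isInfix.trans (w.drop_suffix p).isInfix

lemma infix_slice {f w : List Bool} (h : f <:+: w) : ∃ p q, f = (w.drop p).take q := by
  obtain ⟨s, t, rfl⟩ := h
  exact ⟨s.length, f.length, by rw [List.append_assoc, List.drop_left, List.take_left]⟩

end MesoAux

open MesoAux in
set_option maxHeartbeats 1000000 in
theorem stmt14 (i j k l : ℕ) (hi : 1 ≤ i) (hj : 1 ≤ j) (hk : 1 ≤ k) (hl : 1 ≤ l) :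
    MinimalForbidden (List.replicate i false ++ List.replicate j true ++
        List.replicate k false ++ List.replicate l true)
      ↔ Odd j ∧ Odd k ∧ ((1 < j ∧ l = 1 ∧ i = k) ∨ (1 < k ∧ i = 1 ∧ j = l)) := by
  have hW : (List.replicate i false ++ List.replicate j true ++
      List.replicate k false ++ List.replicate l true) = Wd i j k l := rfl
  rw [hW, Nat.odd_iff, Nat.odd_iff]
  constructor
  · rintro ⟨hmeso, hmin⟩
    have hC := meso_mp _ _ _ _ hmeso
    have hjodd : j % 2 = 1 := by
      by_contra hcon
      have hfW : ((Wd i j k l).drop (i-1)).take (j+2) = Wd 1 j 1 0 := by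
        rw [drop_Wd, take_Wd]
        exact Wd_eq_ext (by omega) (by omega) (by omega) (by omega)
      refine hmin (Wd 1 j 1 0) (by rw [← hfW]; exact slice_infix _ _ _) ?_ ?_
      · intro hE
        have := congrArg List.length hE
        rw [length_Wd, length_Wd] at this
        omega
      · exact meso_mpr1 1 j 1 0 (by omega) rfl (by omega) (by omega)
    have hkodd : k % 2 = 1 := by
      by_contra hcon
      have hfW : ((Wd i j k l).drop (i+j-1)).take (k+2) = Wd 0 1 k 1 := by
        rw [drop_Wd, take_Wd]
        exact Wd_eq_ext (by omega) (by omega) (by omega) (by omega)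
      refine hmin (Wd 0 1 k 1) (by rw [← hfW]; exact slice_infix _ _ _) ?_ ?_
      · intro hE
        have := congrArg List.length hE
        rw [length_Wd, length_Wd] at this
        omega
      · exact meso_mpr2 0 1 k 1 (by omega) rfl (by omega) (by omega)
    rcases hC with ⟨hi0, hik, hlj, hpar⟩ | ⟨hj0, hjl, hik, hpar⟩
    · have hl1 : l = 1 := by
        by_contra hcon
        have hfW : ((Wd i j k l).drop 0).take (i+j+k+1) = Wd i j k 1 := by
          rw [drop_Wd, take_Wd]
          exact Wd_eq_ext (by omega) (by omega) (by omega) (by omega)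
        refine hmin (Wd i j k 1) (by rw [← hfW]; exact slice_infix _ _ _) ?_ ?_
        · intro hE
          have := congrArg List.length hE
          rw [length_Wd, length_Wd] at this
          omega
        · exact meso_mpr1 i j k 1 (by omega) hik (by omega) (by omega)
      exact ⟨hjodd, hkodd, Or.inl ⟨by omega, hl1, hik⟩⟩
    · have hi1 : i = 1 := by
        by_contra hcon
        have hfW : ((Wd i j k l).drop (i-1)).take (1+j+k+l) = Wd 1 j k l := by
          rw [drop_Wd, take_Wd]
          exact Wd_eq_ext (by omega) (by omega) (by omega) (by omega)
        refine hmin (Wd 1 j k l) (by rw [← hfW]; exact slice_infix _ _ _) ?_ ?_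
        · intro hE
          have := congrArg List.length hE
          rw [length_Wd, length_Wd] at this
          omega
        · exact meso_mpr2 1 j k l (by omega) hjl (by omega) (by omega)
      exact ⟨hjodd, hkodd, Or.inr ⟨by omega, hi1, hjl⟩⟩
  · rintro ⟨hj2, hk2, hcase⟩
    constructor
    · rcases hcase with ⟨h1, h2, h3⟩ | ⟨h1, h2, h3⟩
      · exact meso_mpr1 i j k l (by omega) h3 (by omega) (by omega)
      · exact meso_mpr2 i j k l (by omega) h3 (by omega) (by omega)
    · intro f hinf hne hmeso
      obtain ⟨p, q, hf0⟩ := infix_slice hinf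
      rw [drop_Wd, take_Wd] at hf0
      obtain ⟨A, B, C, D, hf, hA, hB, hC', hD⟩ :
          ∃ A B C D, f = Wd A B C D ∧ A = min q (i-p) ∧ B = min (q-(i-p)) (j-(p-i)) ∧
            C = min (q-(i-p)-(j-(p-i))) (k-(p-i-j)) ∧
            D = min (q-(i-p)-(j-(p-i))-(k-(p-i-j))) (l-(p-i-j-k)) :=
        ⟨_, _, _, _, hf0, rfl, rfl, rfl, rfl⟩
      clear hf0
      rw [hf] at hmeso
      have hC := meso_mp _ _ _ _ hmeso
      rcases hcase with ⟨h1, h2, h3⟩ | ⟨h1, h2, h3⟩ <;>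
        rcases hC with ⟨g1, g2, g3, g4⟩ | ⟨g1, g2, g3, g4⟩
      · exact hne (by rw [hf]; exact Wd_eq_ext (by omega) (by omega) (by omega) (by omega))
      · omega
      · omega
      · exact hne (by rw [hf]; exact Wd_eq_ext (by omega) (by omega) (by omega) (by omega))
end

section
/- No binary word of length at least 8 with exactly five runs is minimal forbidden for mesosome-avoidance. -/
/-- The number of runs (maximal blocks of identical letters) of a word. -/
def runCount (w : List Bool) : ℕ := (w.destutter (· ≠ ·)).length

/-!
Write `w = a^r₁ b^r₂ a^r₃ b^r₄ a^r₅`. In every case `w` has a shorter factor `(u v)(v u)`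
with `u v ≠ v u`, so it is not minimal forbidden:
* `x y^(2n) x` (`u = x`, `v = y^n`) when an inner run is even;
* `b^p a^(2n+1) b^p a` (`u = b^p a`, `v = a^n`) or its reversal, with `p = min r₂ r₄`, when the
  middle run is odd and longer than `1`;
* `a b^(2n+1) a b` or its reversal when `r₃ = 1` and `r₂ ≥ 3` or `r₄ ≥ 3`;
* `aababa` or its reversal `ababaa` when `r₂ = r₃ = r₄ = 1`: then length `≥ 7` forces
  `r₁ ≥ 2` or `r₅ ≥ 2`.
-/

open List

namespace List

variable {α : Type*}

theorem destutter'_ne_replicate_append [DecidableEq α] (a : α) (r : ℕ) {u : List α}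
    (hu : u.head? ≠ some a) :
    (replicate r a ++ u).destutter' (· ≠ ·) a = a :: u.destutter (· ≠ ·) := by
  induction r with
  | zero =>
    cases u with
    | nil => rfl
    | cons b t =>
      have hba : b ≠ a := by simpa using hu
      rw [replicate_zero, nil_append, destutter'_cons_pos _ hba.symm, destutter_cons']
  | succ r ih => rwa [replicate_succ, cons_append, destutter'_cons_neg _ (not_not.2 rfl)]

theorem exists_cons_eq_replicate_append (a : α) (t : List α) :
    ∃ r u, a :: t = replicate (r + 1) a ++ u ∧ u.head? ≠ some a := by
  induction t with
  | nil => exact ⟨0, [], rfl, by simp⟩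
  | cons b t ih =>
    by_cases hba : b = a
    · obtain ⟨r, u, h, hu⟩ := ih
      exact ⟨r + 1, u, by rw [hba, h]; rfl, hu⟩
    · exact ⟨0, b :: t, rfl, by simpa using hba⟩

theorem head?_replicate_append {r : ℕ} (hr : r ≠ 0) (a : α) (u : List α) :
    (replicate r a ++ u).head? = some a := by
  obtain ⟨r, rfl⟩ := Nat.exists_eq_succ_of_ne_zero hr
  rfl

theorem replicate_append_replicate_infix {x y : α} {p q r s : ℕ}
    (L M R : List α) (hp : p ≤ r) (hq : q ≤ s) :
    replicate p x ++ M ++ replicate q y <:+: L ++ replicate r x ++ M ++ replicate s y ++ R := by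
  refine ⟨L ++ replicate (r - p) x, replicate (s - q) y ++ R, ?_⟩
  have hx : replicate (r - p) x ++ replicate p x = replicate r x := by
    rw [replicate_append_replicate, Nat.sub_add_cancel hp]
  have hy : replicate q y ++ replicate (s - q) y = replicate s y := by
    rw [replicate_append_replicate, Nat.add_sub_cancel' hq]
  rw [← hx, ← hy]
  simp only [append_assoc]

end List

theorem runCount_replicate_append {r : ℕ} (hr : r ≠ 0) {a : Bool} {u : List Bool}
    (hu : u.head? ≠ some a) : runCount (replicate r a ++ u) = runCount u + 1 := by
  obtain ⟨r, rfl⟩ := Nat.exists_eq_succ_of_ne_zero hr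
  rw [runCount, replicate_succ, cons_append, destutter_cons',
    destutter'_ne_replicate_append a r hu, length_cons, runCount]

theorem runCount_eq_zero {w : List Bool} : runCount w = 0 ↔ w = [] := by
  rw [runCount, length_eq_zero_iff, destutter_eq_nil]

theorem exists_of_runCount_eq_succ {w : List Bool} {n : ℕ} (h : runCount w = n + 1) :
    ∃ a r u, r ≠ 0 ∧ u.head? ≠ some a ∧ runCount u = n ∧ w = replicate r a ++ u := by
  obtain ⟨a, t, rfl⟩ := exists_cons_of_ne_nil (l := w) fun hw => by simp [hw, runCount] at h
  obtain ⟨r, u, hw, hu⟩ := exists_cons_eq_replicate_append a t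
  rw [hw, runCount_replicate_append r.succ_ne_zero hu] at h
  exact ⟨a, r + 1, u, r.succ_ne_zero, hu, by omega, hw⟩

def fiveRuns (a b : Bool) (r₁ r₂ r₃ r₄ r₅ : ℕ) : List Bool :=
  replicate r₁ a ++ replicate r₂ b ++ replicate r₃ a ++ replicate r₄ b ++ replicate r₅ a

theorem exists_fiveRuns_of_runCount_eq_five {w : List Bool} (h : runCount w = 5) :
    ∃ (a : Bool) (r₁ r₂ r₃ r₄ r₅ : ℕ), r₁ ≠ 0 ∧ r₂ ≠ 0 ∧ r₃ ≠ 0 ∧ r₄ ≠ 0 ∧ r₅ ≠ 0 ∧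
      w = fiveRuns a (!a) r₁ r₂ r₃ r₄ r₅ := by
  obtain ⟨a₁, r₁, u₁, h₁, hu₁, c₁, rfl⟩ := exists_of_runCount_eq_succ h
  obtain ⟨a₂, r₂, u₂, h₂, hu₂, c₂, rfl⟩ := exists_of_runCount_eq_succ c₁
  obtain ⟨a₃, r₃, u₃, h₃, hu₃, c₃, rfl⟩ := exists_of_runCount_eq_succ c₂
  obtain ⟨a₄, r₄, u₄, h₄, hu₄, c₄, rfl⟩ := exists_of_runCount_eq_succ c₃
  obtain ⟨a₅, r₅, u₅, h₅, -, c₅, rfl⟩ := exists_of_runCount_eq_succ c₄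
  have alternate {r a a' u} (hr : r ≠ 0) (h : (replicate r a' ++ u).head? ≠ some a) : a' = !a :=
    Bool.eq_not_of_ne (by rwa [head?_replicate_append hr, ne_eq, Option.some_inj] at h)
  obtain rfl := alternate h₂ hu₁
  obtain rfl := alternate h₃ hu₂
  obtain rfl := alternate h₄ hu₃
  obtain rfl := alternate h₅ hu₄
  rw [runCount_eq_zero.1 c₅]
  refine ⟨a₁, r₁, r₂, r₃, r₄, r₅, h₁, h₂, h₃, h₄, h₅, ?_⟩
  simp only [fiveRuns, Bool.not_not, append_nil, append_assoc]

theorem mesosome_append {u v : List Bool} (h : v ++ u ≠ u ++ v) :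
    Mesosome (u ++ v ++ (v ++ u)) :=
  ⟨u ++ v, v ++ u, rfl, ⟨u, v, rfl, rfl⟩, h, fun h₀ => h (by simp_all)⟩

theorem Mesosome.reverse {w : List Bool} (h : Mesosome w) : Mesosome w.reverse := by
  obtain ⟨_, _, rfl, ⟨u, v, rfl, rfl⟩, hne, -⟩ := h
  have hne' : v.reverse ++ u.reverse ≠ u.reverse ++ v.reverse := by
    simpa [← reverse_append] using hne.symm
  simpa using mesosome_append hne'

theorem not_minimalForbidden_of_infix {f w : List Bool} (hf : f <:+: w)
    (hlt : f.length < w.length) (hm : Mesosome f) : ¬ MinimalForbidden w :=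
  fun hw => hw.2 f hf (by rintro rfl; exact hlt.false) hm

section Patterns

variable {a b : Bool}

theorem mesosome_even_run (hab : a ≠ b) {n : ℕ} (hn : n ≠ 0) :
    Mesosome ([a] ++ replicate (n + n) b ++ [a]) := by
  obtain ⟨n, rfl⟩ := Nat.exists_eq_succ_of_ne_zero hn
  simpa [replicate_add] using mesosome_append (u := [a]) (v := replicate (n + 1) b)
    (by simp [replicate_succ, hab.symm])

theorem mesosome_odd_run (hab : a ≠ b) {p n : ℕ} (hp : p ≠ 0) (hn : n ≠ 0) :
    Mesosome (replicate p a ++ replicate (2 * n + 1) b ++ replicate p a ++ [b]) := by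
  have h := mesosome_append (u := replicate p a ++ [b]) (v := replicate n b) <| by
    obtain ⟨p, rfl⟩ := Nat.exists_eq_succ_of_ne_zero hp
    obtain ⟨n, rfl⟩ := Nat.exists_eq_succ_of_ne_zero hn
    simp [replicate_succ, hab.symm]
  rw [show 2 * n + 1 = 1 + n + n by ring, replicate_add, replicate_add]
  simpa only [append_assoc, replicate_one, singleton_append] using h

theorem mesosome_odd_run' (hab : a ≠ b) {p n : ℕ} (hp : p ≠ 0) (hn : n ≠ 0) :
    Mesosome ([b] ++ replicate p a ++ replicate (2 * n + 1) b ++ replicate p a) := by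
  simpa using (mesosome_odd_run hab hp hn).reverse

theorem mesosome_aababa (hab : a ≠ b) : Mesosome [a, a, b, a, b, a] :=
  mesosome_append (u := [a]) (v := [a, b]) (by simp [hab.symm])

theorem mesosome_ababaa (hab : a ≠ b) : Mesosome [a, b, a, b, a, a] := by
  simpa using (mesosome_aababa hab).reverse

end Patterns

section FiveRuns

variable {a b : Bool} {r₁ r₂ r₃ r₄ r₅ : ℕ}

theorem not_minimalForbidden_fiveRuns_of_even (hab : a ≠ b) (h₁ : r₁ ≠ 0) (h₂ : r₂ ≠ 0)
    (h₃ : r₃ ≠ 0) (h₄ : r₄ ≠ 0) (h₅ : r₅ ≠ 0) (heven : Even r₂ ∨ Even r₃ ∨ Even r₄) :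
    ¬ MinimalForbidden (fiveRuns a b r₁ r₂ r₃ r₄ r₅) := by
  unfold fiveRuns
  rcases heven with ⟨n, rfl⟩ | ⟨n, rfl⟩ | ⟨n, rfl⟩
  · refine not_minimalForbidden_of_infix ?_ (by simp; omega)
      (mesosome_even_run hab (n := n) (by omega))
    simpa only [append_assoc, replicate_one, nil_append] using
      replicate_append_replicate_infix (x := a) (y := a) (p := 1) (q := 1) (r := r₁)
      (s := r₃) [] (replicate (n + n) b) (replicate r₄ b ++ replicate r₅ a) (by omega) (by omega)
  · refine not_minimalForbidden_of_infix ?_ (by simp; omega)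
      (mesosome_even_run hab.symm (n := n) (by omega))
    simpa only [append_assoc, replicate_one] using
      replicate_append_replicate_infix (x := b) (y := b) (p := 1) (q := 1) (r := r₂)
      (s := r₄) (replicate r₁ a) (replicate (n + n) a) (replicate r₅ a) (by omega) (by omega)
  · refine not_minimalForbidden_of_infix ?_ (by simp; omega)
      (mesosome_even_run hab (n := n) (by omega))
    simpa only [append_assoc, replicate_one, append_nil] using
      replicate_append_replicate_infix (x := a) (y := a) (p := 1) (q := 1) (r := r₃)
      (s := r₅) (replicate r₁ a ++ replicate r₂ b) (replicate (n + n) b) [] (by omega) (by omega)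

theorem not_minimalForbidden_fiveRuns_of_odd_middle (hab : a ≠ b) (h₁ : r₁ ≠ 0) (h₂ : r₂ ≠ 0)
    (h₄ : r₄ ≠ 0) (h₅ : r₅ ≠ 0) {n : ℕ} (hn : n ≠ 0) :
    ¬ MinimalForbidden (fiveRuns a b r₁ r₂ (2 * n + 1) r₄ r₅) := by
  unfold fiveRuns
  rcases le_total r₄ r₂ with h | h
  · refine not_minimalForbidden_of_infix ?_ (by simp; omega) (mesosome_odd_run hab.symm h₄ hn)
    simpa only [append_assoc, replicate_one, append_nil] using
      replicate_append_replicate_infix (x := b) (y := a) (q := 1) (s := r₅) (replicate r₁ a)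
      (replicate (2 * n + 1) a ++ replicate r₄ b) [] h (by omega)
  · refine not_minimalForbidden_of_infix ?_ (by simp; omega) (mesosome_odd_run' hab.symm h₂ hn)
    simpa only [append_assoc, replicate_one, nil_append] using
      replicate_append_replicate_infix (x := a) (y := b) (p := 1) (r := r₁) []
      (replicate r₂ b ++ replicate (2 * n + 1) a) (replicate r₅ a) (by omega) h

theorem not_minimalForbidden_fiveRuns_of_middle_one (hab : a ≠ b) (h₁ : r₁ ≠ 0) (h₅ : r₅ ≠ 0)
    {m k : ℕ} (hlen : 7 ≤ r₁ + (2 * m + 1) + 1 + (2 * k + 1) + r₅) :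
    ¬ MinimalForbidden (fiveRuns a b r₁ (2 * m + 1) 1 (2 * k + 1) r₅) := by
  unfold fiveRuns
  rcases eq_or_ne m 0 with rfl | hm
  · rcases eq_or_ne k 0 with rfl | hk
    · rcases le_or_gt 2 r₁ with h | h
      · refine not_minimalForbidden_of_infix ?_ (by simp; omega) (mesosome_aababa hab)
        simpa [replicate_succ] using
          replicate_append_replicate_infix (x := a) (y := a) (p := 2) (q := 1) (r := r₁)
          (s := r₅) [] (replicate 1 b ++ replicate 1 a ++ replicate 1 b) [] h (by omega)
      · refine not_minimalForbidden_of_infix ?_ (by simp; omega) (mesosome_ababaa hab)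
        simpa [replicate_succ] using
          replicate_append_replicate_infix (x := a) (y := a) (p := 1) (q := 2) (r := r₁)
          (s := r₅) [] (replicate 1 b ++ replicate 1 a ++ replicate 1 b) [] (by omega)
          (by omega)
    · refine not_minimalForbidden_of_infix ?_ (by simp; omega)
        (mesosome_odd_run' hab one_ne_zero hk)
      simpa only [append_assoc, replicate_one, append_nil, Nat.mul_zero, Nat.zero_add] using
        replicate_append_replicate_infix (x := b) (y := a) (p := 1) (q := 1) (r := 1) (s := r₅)
        (replicate r₁ a) (replicate 1 a ++ replicate (2 * k + 1) b) [] le_rfl (by omega)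
  · refine not_minimalForbidden_of_infix ?_ (by simp; omega)
      (mesosome_odd_run hab one_ne_zero hm)
    simpa only [append_assoc, replicate_one, nil_append] using
      replicate_append_replicate_infix (x := a) (y := b) (p := 1) (q := 1) (r := r₁)
      (s := 2 * k + 1) [] (replicate (2 * m + 1) b ++ replicate 1 a) (replicate r₅ a)
      (by omega) (by omega)

end FiveRuns

theorem stmt15 (w : List Bool) (hlen : 8 ≤ w.length) (hruns : runCount w = 5) :
    ¬ MinimalForbidden w := by
  obtain ⟨a, r₁, r₂, r₃, r₄, r₅, h₁, h₂, h₃, h₄, h₅, rfl⟩ :=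
    exists_fiveRuns_of_runCount_eq_five hruns
  simp only [fiveRuns, length_append, length_replicate] at hlen
  have hab : a ≠ !a := Bool.not_eq_not.2 rfl
  by_cases heven : Even r₂ ∨ Even r₃ ∨ Even r₄
  · exact not_minimalForbidden_fiveRuns_of_even hab h₁ h₂ h₃ h₄ h₅ heven
  simp only [not_or, Nat.not_even_iff_odd] at heven
  obtain ⟨⟨m, rfl⟩, ⟨n, rfl⟩, ⟨k, rfl⟩⟩ := heven
  rcases eq_or_ne n 0 with rfl | hn
  · exact not_minimalForbidden_fiveRuns_of_middle_one hab h₁ h₅ (by omega)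
  · exact not_minimalForbidden_fiveRuns_of_odd_middle hab h₁ h₂ h₄ h₅ hn
end

section
/- No binary word with six or more runs is minimal forbidden for mesosome-avoidance. -/
namespace Stmt16Aux

lemma rc_nil : runCount [] = 0 := rfl

lemma rc_singleton (a : Bool) : runCount [a] = 1 := rfl

lemma rc_cons_cons_eq (a : Bool) (l : List Bool) :
    runCount (a :: a :: l) = runCount (a :: l) := by
  unfold runCount
  rw [List.destutter_cons_cons, if_neg (by simp), List.destutter_cons']

lemma rc_cons_cons_ne {a b : Bool} (h : a ≠ b) (l : List Bool) :
    runCount (a :: b :: l) = runCount (b :: l) + 1 := by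
  unfold runCount
  rw [List.destutter_cons_cons, if_pos h, List.length_cons, List.destutter_cons']

lemma exists_run : ∀ (w : List Bool) (s : Bool), w.head? = some s →
    ∃ a z, 1 ≤ a ∧ w = List.replicate a s ++ z ∧ (z = [] ∨ z.head? = some (!s)) ∧
      runCount w = runCount z + 1 := by
  intro w
  induction w with
  | nil => intro s h; simp at h
  | cons c w ih =>
    intro s h
    rw [List.head?_cons, Option.some.injEq] at h
    subst h
    cases w with
    | nil => exact ⟨1, [], le_refl 1, by simp, Or.inl rfl, by simp [rc_singleton, rc_nil]⟩
    | cons d w' =>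
      by_cases hd : d = c
      · subst hd
        obtain ⟨a, z, ha, haz, hz, hrc⟩ := ih d rfl
        refine ⟨a + 1, z, by omega, ?_, hz, ?_⟩
        · rw [List.replicate_succ, List.cons_append, ← haz]
        · rw [rc_cons_cons_eq, hrc]
      · refine ⟨1, d :: w', le_refl 1, by simp, Or.inr ?_, ?_⟩
        · rw [List.head?_cons, Option.some.injEq]
          cases c <;> cases d <;> simp_all
        · rw [rc_cons_cons_ne (fun hh => hd hh.symm)]

lemma extract5 (w : List Bool) (h6 : 6 ≤ runCount w) :
    ∃ (s : Bool) (r1 r2 r3 r4 r5 : ℕ) (z0 : List Bool),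
      1 ≤ r1 ∧ 1 ≤ r2 ∧ 1 ≤ r3 ∧ 1 ≤ r4 ∧ 1 ≤ r5 ∧
      w = List.replicate r1 s ++ (List.replicate r2 (!s) ++ (List.replicate r3 s ++
          (List.replicate r4 (!s) ++ (List.replicate r5 s ++ ((!s) :: z0))))) := by
  cases w with
  | nil => simp [rc_nil] at h6
  | cons c w0 =>
    obtain ⟨a1, z1, ha1, he1, ho1, hc1⟩ := exists_run (c :: w0) c rfl
    have hz1 : z1.head? = some (!c) := by
      rcases ho1 with h | h
      · exfalso; rw [h, rc_nil] at hc1; omega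
      · exact h
    obtain ⟨a2, z2, ha2, he2, ho2, hc2⟩ := exists_run z1 (!c) hz1
    have hz2 : z2.head? = some c := by
      rcases ho2 with h | h
      · exfalso; rw [h, rc_nil] at hc2; omega
      · rw [h, Bool.not_not]
    obtain ⟨a3, z3, ha3, he3, ho3, hc3⟩ := exists_run z2 c hz2
    have hz3 : z3.head? = some (!c) := by
      rcases ho3 with h | h
      · exfalso; rw [h, rc_nil] at hc3; omega
      · exact h
    obtain ⟨a4, z4, ha4, he4, ho4, hc4⟩ := exists_run z3 (!c) hz3
    have hz4 : z4.head? = some c := by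
      rcases ho4 with h | h
      · exfalso; rw [h, rc_nil] at hc4; omega
      · rw [h, Bool.not_not]
    obtain ⟨a5, z5, ha5, he5, ho5, hc5⟩ := exists_run z4 c hz4
    have hz5 : z5.head? = some (!c) := by
      rcases ho5 with h | h
      · exfalso; rw [h, rc_nil] at hc5; omega
      · exact h
    obtain ⟨z0, rfl⟩ : ∃ z0, z5 = (!c) :: z0 := by
      cases z5 with
      | nil => simp at hz5
      | cons e t =>
        rw [List.head?_cons, Option.some.injEq] at hz5
        exact ⟨t, by rw [hz5]⟩
    exact ⟨c, a1, a2, a3, a4, a5, z0, ha1, ha2, ha3, ha4, ha5, by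
      rw [he1, he2, he3, he4, he5]⟩

/-- Basic mesosome constructor. -/
lemma meso_mk (u v : List Bool) (hu : u ≠ []) (hne : u ++ v ≠ v ++ u) :
    Mesosome ((u ++ v) ++ (v ++ u)) :=
  ⟨u ++ v, v ++ u, rfl, ⟨u, v, rfl, rfl⟩, fun h => hne h.symm,
    fun h => hu (List.append_eq_nil_iff.mp h).1⟩

/-- glue a replicate with a following equal letter -/
lemma glue1 (n : ℕ) (a : Bool) (X : List Bool) :
    List.replicate n a ++ (a :: X) = List.replicate (n + 1) a ++ X := by
  rw [List.replicate_succ', List.append_assoc, List.singleton_append]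

/-- Alternating word of length `n` starting with `s`. -/
def alt : ℕ → Bool → List Bool
  | 0, _ => []
  | n + 1, s => s :: alt n (!s)

lemma alt_succ (n : ℕ) (s : Bool) : alt (n + 1) s = s :: alt n (!s) := rfl

lemma alt_length : ∀ (n : ℕ) (s : Bool), (alt n s).length = n := by
  intro n
  induction n with
  | zero => intro s; rfl
  | succ n ih => intro s; rw [alt_succ, List.length_cons, ih]

lemma alt_append : ∀ (m n : ℕ) (s : Bool),
    alt (m + n) s = alt m s ++ alt n (if m % 2 = 0 then s else !s) := by
  intro m
  induction m with
  | zero => intro n s; simp [alt]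
  | succ m ih =>
    intro n s
    have hmn : m + 1 + n = (m + n) + 1 := by omega
    rw [hmn]
    simp only [alt_succ]
    rw [ih n (!s)]
    rcases Nat.mod_two_eq_zero_or_one m with h | h
    · rw [if_pos h, if_neg (by omega)]; simp
    · rw [if_neg (by omega), if_pos (by omega), Bool.not_not]; simp

lemma alt_five (s : Bool) : alt 5 s = [s, !s, s, !s, s] := by
  show alt (4+1) s = _
  rw [alt_succ]
  show s :: alt (3+1) (!s) = _
  rw [alt_succ]
  show _ :: _ :: alt (2+1) _ = _
  rw [alt_succ]
  show _ :: _ :: _ :: alt (1+1) _ = _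
  rw [alt_succ]
  show _ :: _ :: _ :: _ :: alt (0+1) _ = _
  rw [alt_succ]
  simp [alt, Bool.not_not]

lemma count_alt : ∀ (n : ℕ) (s : Bool),
    (alt n s).count s = (n + 1) / 2 ∧ (alt n (!s)).count s = n / 2 := by
  intro n
  induction n with
  | zero => intro s; simp [alt]
  | succ n ih =>
    intro s
    constructor
    · rw [alt_succ]
      have h2 := (ih s).2
      have hstep : (s :: alt n (!s)).count s = (alt n (!s)).count s + 1 := by
        cases s <;> simp [List.count_cons]
      omega
    · rw [alt_succ, Bool.not_not]
      have h1 := (ih s).1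
      have hstep : ((!s) :: alt n s).count s = (alt n s).count s := by
        cases s <;> simp [List.count_cons]
      omega

lemma alt_not_meso (n : ℕ) (s : Bool) : ¬ Mesosome (alt n s) := by
  rintro ⟨x, x', hw, ⟨u, v, hxx, hxx'⟩, hne, hxe⟩
  have hlen : x'.length = x.length := by
    rw [hxx, hxx', List.length_append, List.length_append]; omega
  have hn : n = x.length + x'.length := by
    have h := congrArg List.length hw
    rwa [alt_length, List.length_append] at h
  have hsp : x ++ x' = alt x.length s ++ alt x'.length (if x.length % 2 = 0 then s else !s) := by
    rw [← hw, hn, alt_append]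
  obtain ⟨hx1, hx2⟩ := List.append_inj hsp (by rw [alt_length])
  have hcnt : x.count s = x'.count s := by
    rw [hxx, hxx', List.count_append, List.count_append]; omega
  rw [hlen] at hx2
  rcases Nat.mod_two_eq_zero_or_one x.length with hp | hp
  · rw [if_pos hp] at hx2
    exact hne (hx2.trans hx1.symm)
  · rw [if_neg (by omega)] at hx2
    have c1 : x.count s = (x.length + 1) / 2 := by
      have := (count_alt x.length s).1
      rw [← hx1] at this
      exact this
    have c2 : x'.count s = x.length / 2 := by
      have := (count_alt x.length s).2
      rw [← hx2] at this
      exact this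
    omega

lemma chainN : ∀ (z : List Bool) (s : Bool),
    (∀ c : Bool, ¬ ([c, !c, c, !c, c, c] <:+: ([s, !s, s, !s, s] ++ z))) →
    z = alt z.length (!s) := by
  intro z
  induction z with
  | nil => intro s _; rfl
  | cons d z' ih =>
    intro s H
    by_cases hd : d = !s
    · subst hd
      have H' : ∀ c : Bool, ¬ ([c, !c, c, !c, c, c] <:+: ([!s, !(!s), !s, !(!s), !s] ++ z')) := by
        intro c hc
        rw [Bool.not_not] at hc
        apply H c
        obtain ⟨l, r, hlr⟩ := hc
        refine ⟨s :: l, r, ?_⟩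
        simp only [List.cons_append]
        rw [hlr]
        simp
      have h2 := ih (!s) H'
      rw [Bool.not_not] at h2
      rw [List.length_cons, alt_succ, Bool.not_not, ← h2]
    · have hds : d = s := by cases d <;> cases s <;> simp_all
      subst hds
      exact absurd ⟨[], z', by simp⟩ (H d)

end Stmt16Aux

open Stmt16Aux in
theorem stmt16 (w : List Bool) (hruns : 6 ≤ runCount w) :
    ¬ MinimalForbidden w := by
  rintro ⟨hm, hmin⟩
  have finish : ∀ u v l r : List Bool, u ≠ [] → u ++ v ≠ v ++ u → (l ≠ [] ∨ r ≠ []) →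
      w = l ++ ((u ++ v) ++ (v ++ u)) ++ r → False := by
    intro u v l r hu hne hlr hwf
    refine hmin ((u ++ v) ++ (v ++ u)) ⟨l, r, hwf.symm⟩ ?_ (meso_mk u v hu hne)
    intro hfw
    rw [← hfw] at hwf
    have hl := congrArg List.length hwf
    simp only [List.length_append] at hl
    rcases hlr with h | h
    · have := List.length_pos_iff.mpr h; omega
    · have := List.length_pos_iff.mpr h; omega
  obtain ⟨s, r1, r2, r3, r4, r5, z0, h1, h2, h3, h4, h5, hw⟩ := extract5 w hruns
  by_cases e2 : r2 % 2 = 0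
  · -- B1 : r2 even
    obtain ⟨a, rfl⟩ : ∃ x, r2 = (x + 1) + (x + 1) := ⟨r2 / 2 - 1, by omega⟩
    obtain ⟨b1, rfl⟩ : ∃ x, r1 = x + 1 := ⟨r1 - 1, by omega⟩
    obtain ⟨b3, rfl⟩ : ∃ x, r3 = 1 + x := ⟨r3 - 1, by omega⟩
    refine finish [s] (List.replicate (a + 1) (!s))
      (List.replicate b1 s)
      (List.replicate b3 s ++ (List.replicate r4 (!s) ++ (List.replicate r5 s ++ ((!s) :: z0))))
      (by simp) ?_ (Or.inr (by simp)) ?_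
    · intro h
      simp only [List.replicate_succ, List.cons_append, List.singleton_append,
        List.append_assoc] at h
      cases s <;> simp_all
    · rw [hw]
      simp [List.append_assoc, List.cons_append, List.singleton_append, List.nil_append,
        List.replicate_add, List.replicate_one]
  · by_cases e3 : r3 % 2 = 0
    · -- B2 : r3 even
      obtain ⟨b, rfl⟩ : ∃ x, r3 = (x + 1) + (x + 1) := ⟨r3 / 2 - 1, by omega⟩
      obtain ⟨b2, rfl⟩ : ∃ x, r2 = x + 1 := ⟨r2 - 1, by omega⟩
      obtain ⟨b4, rfl⟩ : ∃ x, r4 = 1 + x := ⟨r4 - 1, by omega⟩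
      refine finish [!s] (List.replicate (b + 1) s)
        (List.replicate r1 s ++ List.replicate b2 (!s))
        (List.replicate b4 (!s) ++ (List.replicate r5 s ++ ((!s) :: z0)))
        (by simp) ?_ (Or.inr (by simp)) ?_
      · intro h
        simp only [List.replicate_succ, List.cons_append, List.singleton_append,
          List.append_assoc] at h
        cases s <;> simp_all
      · rw [hw]
        simp [List.append_assoc, List.cons_append, List.singleton_append, List.nil_append,
          List.replicate_add, List.replicate_one]
    · by_cases g3 : 2 ≤ r3
      · -- r3 odd, ≥ 3
        rcases le_total r2 r4 with h24 | h42
        · -- B3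
          obtain ⟨c, rfl⟩ : ∃ x, r3 = (x + 1) + ((x + 1) + 1) := ⟨(r3 - 1) / 2 - 1, by omega⟩
          obtain ⟨b1, rfl⟩ : ∃ x, r1 = x + 1 := ⟨r1 - 1, by omega⟩
          obtain ⟨d, rfl⟩ : ∃ x, r4 = r2 + x := ⟨r4 - r2, by omega⟩
          obtain ⟨e, rfl⟩ : ∃ x, r2 = x + 1 := ⟨r2 - 1, by omega⟩
          refine finish (s :: List.replicate (e + 1) (!s)) (List.replicate (c + 1) s)
            (List.replicate b1 s)
            (List.replicate d (!s) ++ (List.replicate r5 s ++ ((!s) :: z0)))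
            (by simp) ?_ (Or.inr (by simp)) ?_
          · intro h
            rw [glue1] at h
            simp only [List.replicate_succ, List.cons_append, List.singleton_append,
              List.append_assoc] at h
            cases s <;> simp_all
          · rw [hw]
            simp [List.append_assoc, List.cons_append, List.singleton_append, List.nil_append,
              List.replicate_add, List.replicate_one]
        · -- B4
          obtain ⟨c, rfl⟩ : ∃ x, r3 = 1 + ((x + 1) + (x + 1)) := ⟨(r3 - 1) / 2 - 1, by omega⟩
          obtain ⟨d, rfl⟩ : ∃ x, r2 = x + r4 := ⟨r2 - r4, by omega⟩
          obtain ⟨b5, rfl⟩ : ∃ x, r5 = 1 + x := ⟨r5 - 1, by omega⟩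
          obtain ⟨e, rfl⟩ : ∃ x, r4 = x + 1 := ⟨r4 - 1, by omega⟩
          -- f = (R r4 t ++ [s]) vv… with u = R r4 t ++ [s], v = R c s; middle s-run = 1+(c+c)
          -- here r3 was decomposed as (c+1)+((c+1)+1); adjust: we need the form [s] first.
          -- Use u = List.replicate (e+1) (!s) ++ [s]
          refine finish (List.replicate (e + 1) (!s) ++ [s]) (List.replicate (c + 1) s)
            (List.replicate r1 s ++ List.replicate d (!s))
            (List.replicate b5 s ++ ((!s) :: z0))
            (by simp) ?_ (Or.inr (by simp)) ?_
          · intro h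
            simp only [List.replicate_succ, List.cons_append, List.singleton_append,
              List.append_assoc] at h
            cases s <;> simp_all
          · rw [hw]
            simp [List.append_assoc, List.cons_append, List.singleton_append, List.nil_append,
              List.replicate_add, List.replicate_one]
      · -- r3 = 1
        have hr3 : r3 = 1 := by omega
        subst hr3
        by_cases g2 : 2 ≤ r2
        · -- B5 : r2 odd ≥ 3
          obtain ⟨a, rfl⟩ : ∃ x, r2 = 1 + ((x + 1) + (x + 1)) := ⟨(r2 - 1) / 2 - 1, by omega⟩
          obtain ⟨b1, rfl⟩ : ∃ x, r1 = x + 1 := ⟨r1 - 1, by omega⟩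
          obtain ⟨b4, rfl⟩ : ∃ x, r4 = 1 + x := ⟨r4 - 1, by omega⟩
          refine finish [s, !s] (List.replicate (a + 1) (!s))
            (List.replicate b1 s)
            (List.replicate b4 (!s) ++ (List.replicate r5 s ++ ((!s) :: z0)))
            (by simp) ?_ (Or.inr (by simp)) ?_
          · intro h
            simp only [List.replicate_succ, List.cons_append, List.singleton_append,
              List.append_assoc] at h
            cases s <;> simp_all
          · rw [hw]
            simp [List.append_assoc, List.cons_append, List.singleton_append, List.nil_append,
              List.replicate_add, List.replicate_one]
        · have hr2 : r2 = 1 := by omega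
          subst hr2
          by_cases e4 : r4 % 2 = 0
          · -- B6 : r4 even
            obtain ⟨b, rfl⟩ : ∃ x, r4 = (x + 1) + (x + 1) := ⟨r4 / 2 - 1, by omega⟩
            obtain ⟨b5, rfl⟩ : ∃ x, r5 = 1 + x := ⟨r5 - 1, by omega⟩
            refine finish [s] (List.replicate (b + 1) (!s))
              (List.replicate r1 s ++ [!s])
              (List.replicate b5 s ++ ((!s) :: z0))
              (by simp) ?_ (Or.inr (by simp)) ?_
            · intro h
              simp only [List.replicate_succ, List.cons_append, List.singleton_append,
                List.append_assoc] at h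
              cases s <;> simp_all
            · rw [hw]
              simp [List.append_assoc, List.cons_append, List.singleton_append, List.nil_append,
                List.replicate_add, List.replicate_one]
          · by_cases g4 : 2 ≤ r4
            · -- B7 : r4 odd ≥ 3
              obtain ⟨a, rfl⟩ : ∃ x, r4 = (x + 1) + ((x + 1) + 1) := ⟨(r4 - 1) / 2 - 1, by omega⟩
              obtain ⟨b5, rfl⟩ : ∃ x, r5 = 1 + x := ⟨r5 - 1, by omega⟩
              refine finish [!s, s] (List.replicate (a + 1) (!s))
                (List.replicate r1 s)
                (List.replicate b5 s ++ ((!s) :: z0))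
                (by simp) ?_ (Or.inr (by simp)) ?_
              · intro h
                rw [glue1] at h
                simp only [List.replicate_succ, List.cons_append, List.singleton_append,
                  List.append_assoc] at h
                cases s <;> simp_all
              · rw [hw]
                simp [List.append_assoc, List.cons_append, List.singleton_append, List.nil_append,
                  List.replicate_add, List.replicate_one]
            · have hr4 : r4 = 1 := by omega
              subst hr4
              by_cases e5 : r5 % 2 = 0
              · -- B8 : r5 even
                obtain ⟨b, rfl⟩ : ∃ x, r5 = (x + 1) + (x + 1) := ⟨r5 / 2 - 1, by omega⟩
                refine finish [!s] (List.replicate (b + 1) s)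
                  (List.replicate r1 s ++ [!s, s])
                  z0
                  (by simp) ?_ (Or.inl (by simp)) ?_
                · intro h
                  simp only [List.replicate_succ, List.cons_append, List.singleton_append,
                    List.append_assoc] at h
                  cases s <;> simp_all
                · rw [hw]
                  simp [List.append_assoc, List.cons_append, List.singleton_append,
                    List.nil_append, List.replicate_add, List.replicate_one]
              · by_cases g5 : 2 ≤ r5
                · -- B9 : r5 odd ≥ 3
                  obtain ⟨a, rfl⟩ : ∃ x, r5 = (x + 1) + ((x + 1) + 1) := ⟨(r5 - 1) / 2 - 1, by omega⟩
                  refine finish [s, !s] (List.replicate (a + 1) s)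
                    (List.replicate r1 s ++ [!s])
                    z0
                    (by simp) ?_ (Or.inl (by simp)) ?_
                  · intro h
                    rw [glue1] at h
                    simp only [List.replicate_succ, List.cons_append, List.singleton_append,
                      List.append_assoc] at h
                    cases s <;> simp_all
                  · rw [hw]
                    simp [List.append_assoc, List.cons_append, List.singleton_append,
                      List.nil_append, List.replicate_add, List.replicate_one]
                · have hr5 : r5 = 1 := by omega
                  subst hr5
                  by_cases g1 : 2 ≤ r1
                  · -- B10
                    obtain ⟨b1, rfl⟩ : ∃ x, r1 = (x + 1) + 1 := ⟨r1 - 2, by omega⟩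
                    refine finish [s] [s, !s]
                      (List.replicate b1 s)
                      ((!s) :: z0)
                      (by simp) ?_ (Or.inr (by simp)) ?_
                    · intro h
                      cases s <;> simp_all
                    · rw [hw]
                      simp [List.append_assoc, List.cons_append, List.singleton_append,
                        List.nil_append, List.replicate_add, List.replicate_one]
                  · -- chain case : r1 = … = r5 = 1
                    have hr1 : r1 = 1 := by omega
                    subst hr1
                    have hwz : w = [s, !s, s, !s, s] ++ ((!s) :: z0) := by
                      rw [hw]; simp
                    have H : ∀ c : Bool,
                        ¬ ([c, !c, c, !c, c, c] <:+: ([s, !s, s, !s, s] ++ ((!s) :: z0))) := by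
                      intro c hc
                      rw [← hwz] at hc
                      have hne_w : [c, !c, c, !c, c, c] ≠ w := by
                        intro he
                        rw [hwz] at he
                        cases s <;> cases c <;> simp_all
                      have hmes : Mesosome [c, !c, c, !c, c, c] := by
                        have hmm := meso_mk [c] [!c, c] (by simp) (by cases c <;> decide)
                        simpa using hmm
                      exact hmin _ hc hne_w hmes
                    have hz := chainN ((!s) :: z0) s H
                    have halt : w = alt (5 + ((!s) :: z0).length) s := by
                      rw [alt_append, alt_five, if_neg (by omega), hwz]
                      exact congrArg (fun L => [s, !s, s, !s, s] ++ L) hz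
                    exact alt_not_meso _ s (halt ▸ hm)
end

section
/- If w = 0^i 1^j 0^k 1^ℓ with i, j, k, ℓ ≥ 1, i ≥ k, and j > 1, then w contains a mesosome; specifically, w contains the factor 0^k 1^((j+1)/2) · 1^((j-1)/2) 0^k 1 when j is odd, which is a product of two distinct conjugate words. -/
theorem stmt19 (i j k l : ℕ) (hi : 1 ≤ i) (hj : 1 < j) (hk : 1 ≤ k) (hl : 1 ≤ l)
    (hik : k ≤ i) :
    (∃ f : List Bool, f <:+: (List.replicate i false ++ List.replicate j true ++
        List.replicate k false ++ List.replicate l true) ∧ Mesosome f) ∧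
    (Odd j →
      let x : List Bool := List.replicate k false ++ List.replicate ((j + 1) / 2) true
      let x' : List Bool := List.replicate ((j - 1) / 2) true ++ List.replicate k false ++ [true]
      (x ++ x') <:+: (List.replicate i false ++ List.replicate j true ++
          List.replicate k false ++ List.replicate l true) ∧ Conj x x' ∧ x' ≠ x) := by
  obtain ⟨k', rfl⟩ : ∃ k', k = k' + 1 := ⟨k - 1, by omega⟩
  constructor
  · rcases Nat.even_or_odd j with ⟨m, hm⟩ | ⟨m, hm⟩
    · -- even: j = 2m
      obtain ⟨m', rfl⟩ : ∃ m', m = m' + 1 := ⟨m - 1, by omega⟩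
      refine ⟨(List.replicate (k'+1) false ++ List.replicate (m'+1) true) ++
          (List.replicate (m'+1) true ++ List.replicate (k'+1) false),
        ⟨List.replicate (i-(k'+1)) false, List.replicate l true, ?_⟩,
        List.replicate (k'+1) false ++ List.replicate (m'+1) true,
        List.replicate (m'+1) true ++ List.replicate (k'+1) false, rfl,
        ⟨List.replicate (k'+1) false, List.replicate (m'+1) true, rfl, rfl⟩,
        by simp [List.replicate_succ], by simp [List.replicate_succ]⟩
      have h1 : i = (i - (k'+1)) + (k'+1) := by omega
      have h2 : j = (m'+1) + (m'+1) := by omega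
      rw [h1, h2]
      simp [List.replicate_add, List.append_assoc]
    · -- odd: j = 2m+1
      obtain ⟨m', rfl⟩ : ∃ m', m = m' + 1 := ⟨m - 1, by omega⟩
      refine ⟨(List.replicate (k'+1) false ++ List.replicate (m'+2) true) ++
          (List.replicate (m'+1) true ++ List.replicate (k'+1) false ++ [true]),
        ⟨List.replicate (i-(k'+1)) false, List.replicate (l-1) true, ?_⟩,
        _, _, rfl,
        ⟨List.replicate (k'+1) false ++ [true], List.replicate (m'+1) true,
          by simp [List.replicate_succ, List.append_assoc], by simp [List.append_assoc]⟩,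
        by simp [List.replicate_succ], by simp [List.replicate_succ]⟩
      have h1 : i = (i - (k'+1)) + (k'+1) := by omega
      have h2 : j = (m'+2) + (m'+1) := by omega
      have h3 : l = 1 + (l-1) := by omega
      rw [h1, h2, h3]
      simp [List.replicate_add, List.append_assoc]
  · rintro ⟨m, hm⟩
    obtain ⟨m', rfl⟩ : ∃ m', m = m' + 1 := ⟨m - 1, by omega⟩
    have e1 : (j + 1) / 2 = m' + 2 := by omega
    have e2 : (j - 1) / 2 = m' + 1 := by omega
    rw [e1, e2]
    refine ⟨⟨List.replicate (i-(k'+1)) false, List.replicate (l-1) true, ?_⟩,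
      ⟨List.replicate (k'+1) false ++ [true], List.replicate (m'+1) true,
        by simp [List.replicate_succ, List.append_assoc], by simp [List.append_assoc]⟩,
      by simp [List.replicate_succ]⟩
    have h1 : i = (i - (k'+1)) + (k'+1) := by omega
    have h2 : j = (m'+2) + (m'+1) := by omega
    have h3 : l = 1 + (l-1) := by omega
    rw [h1, h2, h3]
    simp [List.replicate_add, List.append_assoc]
end
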